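/- Lemma 6 (bounded time until the upper sets empty or the minimum increases): under Assumption 1 and the γ/α setup, for any time k0 there exists a time k1 with k0 ≤ k1 ≤ k0 + n·(V(k0)/β + 1)·(1/(2δ) + 1)^{n−1} such that for all k ≥ k1, either X4(k) ∪ X5(k) ∪ X6(k) = ∅ or m(k) > m(k0); here δ = min over edges (p,q) of G of w_pq and β = min{γ, δ}. -/

import Mathlib

open Finset Filter

/-- Assumption 1 on the weight matrix `W` relative to the graph `G`:
symmetric, nonnegative, rows sum to 1, diagonally dominant (`w_ii > 1/2`),
respects the communication graph, and rational weights in `(0,1)` on edges. -/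
def Assumption1 {n : ℕ} (G : SimpleGraph (Fin n)) (W : Matrix (Fin n) (Fin n) ℝ) : Prop :=
  (∀ i j, W i j = W j i) ∧
  (∀ i j, 0 ≤ W i j) ∧
  (∀ i, ∑ j, W i j = 1) ∧
  (∀ i, 1 / 2 < W i i) ∧
  (∀ i j, i ≠ j → ¬G.Adj i j → W i j = 0) ∧
  (∀ i j, G.Adj i j → (∃ q : ℚ, (q : ℝ) = W i j) ∧ 0 < W i j ∧ W i j < 1)

/-- The quantized system `x(k+1) = W ⌊x(k)⌋ + x(k) − ⌊x(k)⌋`, componentwise. -/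
def Traj {n : ℕ} (W : Matrix (Fin n) (Fin n) ℝ) (x : ℕ → Fin n → ℝ) : Prop :=
  ∀ k i, x (k + 1) i = (∑ j, W i j * (⌊x k j⌋ : ℝ)) + x k i - (⌊x k i⌋ : ℝ)

/-- `m(k) = min_i ⌊x_i(k)⌋`. -/
noncomputable def mfun {n : ℕ} (hn : 0 < n) (x : ℕ → Fin n → ℝ) (k : ℕ) : ℤ :=
  Finset.univ.inf' ⟨⟨0, hn⟩, Finset.mem_univ _⟩ fun i => ⌊x k i⌋

/-- `M(k) = max_i ⌊x_i(k)⌋`. -/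
noncomputable def Mfun {n : ℕ} (hn : 0 < n) (x : ℕ → Fin n → ℝ) (k : ℕ) : ℤ :=
  Finset.univ.sup' ⟨⟨0, hn⟩, Finset.mem_univ _⟩ fun i => ⌊x k i⌋

/-- The γ gap conditions (fractional part `c_i(k) = x_i(k) − ⌊x_i(k)⌋`). -/
def GammaSetup {n : ℕ} (W : Matrix (Fin n) (Fin n) ℝ) (x : ℕ → Fin n → ℝ) (γ : ℝ) : Prop :=
  0 < γ ∧
  ∀ i k,
    (x k i - (⌊x k i⌋ : ℝ) > 1 - W i i → x k i - (⌊x k i⌋ : ℝ) - (1 - W i i) ≥ 2 * γ) ∧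
    (1 - (x k i - (⌊x k i⌋ : ℝ)) > 1 - W i i →
      1 - (x k i - (⌊x k i⌋ : ℝ)) - (1 - W i i) ≥ 2 * γ) ∧
    1 - (x k i - (⌊x k i⌋ : ℝ)) ≥ 2 * γ ∧
    1 / 2 - (1 - W i i) ≥ 2 * γ

/-- `α_i = 1 − w_ii + γ`. -/
noncomputable def alpha {n : ℕ} (W : Matrix (Fin n) (Fin n) ℝ) (γ : ℝ) (i : Fin n) : ℝ :=
  1 - W i i + γ

/-- The Lyapunov function `V(k) = Σ_i max{|x_i(k) − m(k) − 1| − α_i, 0}`. -/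
noncomputable def Vfun {n : ℕ} (hn : 0 < n) (W : Matrix (Fin n) (Fin n) ℝ) (γ : ℝ)
    (x : ℕ → Fin n → ℝ) (k : ℕ) : ℝ :=
  ∑ i, max (|x k i - (mfun hn x k : ℝ) - 1| - alpha W γ i) 0

/-- `δ = min_{(p,q) ∈ E} w_pq`. -/
noncomputable def deltaMin {n : ℕ} (G : SimpleGraph (Fin n)) (W : Matrix (Fin n) (Fin n) ℝ) : ℝ :=
  sInf {r : ℝ | ∃ p q, G.Adj p q ∧ r = W p q}

open Classical in
/-- `T_s(k0,k)`: number of times `t ∈ [k0,k]` at which node `s` lies in `X1 ∪ X2`,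
i.e. `x_s(t) < m(t) + 1`. -/
noncomputable def Tcount {n : ℕ} (hn : 0 < n) (x : ℕ → Fin n → ℝ) (s : Fin n)
    (k0 k : ℕ) : ℕ :=
  ((Finset.Icc k0 k).filter fun t => x t s < (mfun hn x t : ℝ) + 1).card

/-!
Fix the level `M = m(k₀)` and measure the upper sets by the potential
`Φ = Σᵢ max (xᵢ - M - 1 - αᵢ) 0 ≤ V(k₀)`. Writing the update with the floors clipped from below at
`M + 1`, one sees that `Φ` never increases while the minimum stays at `M`, and that it drops by
`β = min γ δ` at every step containing a *witness*: an edge from a node at the minimum level to an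
upper node, or from a non-upper node one level up to a node at least two levels up. Between
witnesses the upper set is frozen; nodes next to it never visit the minimum level, and any other
node visits it at most about `1 + 1/(2δ)` times as often as its neighbour closer to the upper set.
Along a path this bounds the length of every witness-free stretch by `3n((1/(2δ) + 1)^(n-2) - 1)`.
Counting witness steps (at most `V(k₀)/β`) and the stretches between them gives the bound; once
the upper set is empty it stays empty as long as the minimum does not move.
-/

section Weights

variable {n : ℕ} {G : SimpleGraph (Fin n)} {W : Matrix (Fin n) (Fin n) ℝ}

theorem Assumption1.symm (hW : Assumption1 G W) (i j : Fin n) : W i j = W j i := hW.1 i j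

theorem Assumption1.nonneg (hW : Assumption1 G W) (i j : Fin n) : 0 ≤ W i j := hW.2.1 i j

theorem Assumption1.sum_row (hW : Assumption1 G W) (i : Fin n) : ∑ j, W i j = 1 := hW.2.2.1 i

theorem Assumption1.half_lt_diag (hW : Assumption1 G W) (i : Fin n) : 1 / 2 < W i i :=
  hW.2.2.2.1 i

theorem Assumption1.pos_of_adj (hW : Assumption1 G W) {i j : Fin n} (h : G.Adj i j) :
    0 < W i j :=
  (hW.2.2.2.2.2 i j h).2.1

theorem Assumption1.adj_of_ne_zero (hW : Assumption1 G W) {i j : Fin n} (hij : i ≠ j)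
    (h : W i j ≠ 0) : G.Adj i j := by
  by_contra hna
  exact h (hW.2.2.2.2.1 i j hij hna)

theorem Assumption1.mul_le_sum_mul (hW : Assumption1 G W) {f : Fin n → ℝ} (hf : ∀ j, 0 ≤ f j)
    (i j : Fin n) : W i j * f j ≤ ∑ l, W i l * f l :=
  single_le_sum (f := fun l => W i l * f l) (fun l _ => mul_nonneg (hW.nonneg i l) (hf l))
    (mem_univ j)

theorem Assumption1.diag_le_one (hW : Assumption1 G W) (i : Fin n) : W i i ≤ 1 := by
  simpa [hW.sum_row] using hW.mul_le_sum_mul (f := fun _ => 1) (fun _ => zero_le_one) i i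

theorem Assumption1.sum_mul_const (hW : Assumption1 G W) (i : Fin n) (c : ℝ) :
    ∑ j, W i j * c = c := by
  rw [← sum_mul, hW.sum_row, one_mul]

theorem Assumption1.add_le_one_sub_diag (hW : Assumption1 G W) {i a b : Fin n} (hab : a ≠ b)
    (ha : a ≠ i) (hb : b ≠ i) : W i a + W i b ≤ 1 - W i i := by
  have hsub : ({i, a, b} : Finset (Fin n)) ⊆ univ := subset_univ _
  have := sum_le_sum_of_subset_of_nonneg hsub fun j _ _ => hW.nonneg i j
  rw [sum_insert (by simp [ha.symm, hb.symm]), sum_pair hab, hW.sum_row] at this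
  linarith

theorem Assumption1.sum_sum_mul_sub (hW : Assumption1 G W) (f : Fin n → ℝ) :
    ∑ i, ∑ j, W i j * (f j - f i) = 0 := by
  have hcol : ∑ i, ∑ j, W i j * f j = ∑ j, f j := by
    rw [sum_comm]
    refine sum_congr rfl fun j _ => ?_
    simp_rw [hW.symm _ j]
    exact hW.sum_mul_const j (f j)
  simp only [mul_sub, sum_sub_distrib, hcol, hW.sum_mul_const, sub_self]

end Weights

section EdgeWeights

variable {n : ℕ} {G : SimpleGraph (Fin n)} {W : Matrix (Fin n) (Fin n) ℝ}

theorem finite_edgeWeights (G : SimpleGraph (Fin n)) (W : Matrix (Fin n) (Fin n) ℝ) :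
    {r : ℝ | ∃ p q, G.Adj p q ∧ r = W p q}.Finite :=
  (Set.finite_range fun pq : Fin n × Fin n => W pq.1 pq.2).subset
    fun _ ⟨p, q, _, hr⟩ => ⟨(p, q), hr.symm⟩

theorem deltaMin_le_of_adj {p q : Fin n} (h : G.Adj p q) : deltaMin G W ≤ W p q :=
  csInf_le (finite_edgeWeights G W).bddBelow ⟨p, q, h, rfl⟩

theorem deltaMin_pos (hW : Assumption1 G W) (hG : G.Connected) (hn : 1 < n) :
    0 < deltaMin G W := by
  have : Nontrivial (Fin n) := Fin.nontrivial_iff_two_le.2 hn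
  obtain ⟨q, hpq⟩ := hG.preconnected.exists_adj_of_nontrivial (⟨0, by omega⟩ : Fin n)
  obtain ⟨p', q', hadj, heq⟩ : deltaMin G W ∈ {r : ℝ | ∃ p q, G.Adj p q ∧ r = W p q} :=
    Set.Nonempty.csInf_mem ⟨_, _, _, hpq, rfl⟩ (finite_edgeWeights G W)
  exact heq ▸ hW.pos_of_adj hadj

theorem one_le_inv_two_mul_deltaMin_add_one (hW : Assumption1 G W) (hG : G.Connected)
    (hn : 1 < n) : 1 ≤ 1 / (2 * deltaMin G W) + 1 := by
  have := deltaMin_pos hW hG hn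
  have : 0 ≤ 1 / (2 * deltaMin G W) := by positivity
  linarith

/-- Walking from outside the edge `{p, q}` into it, the first vertex of the edge reached has two
distinct neighbours. -/
theorem SimpleGraph.Walk.exists_adj_adj {V : Type*} {G : SimpleGraph V} {c d : V}
    (w : G.Walk c d) {p q : V} (hpq : G.Adj p q) (hd : d = p) (hcp : c ≠ p) (hcq : c ≠ q) :
    ∃ z a b, a ≠ b ∧ G.Adj z a ∧ G.Adj z b := by
  induction w with
  | nil => exact absurd hd hcp
  | @cons u v _ hadj _ ih =>
    by_cases hv : v = p ∨ v = q
    · rcases hv with rfl | rfl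
      · exact ⟨v, u, q, hcq, hadj.symm, hpq⟩
      · exact ⟨v, u, p, hcp, hadj.symm, hpq.symm⟩
    · push Not at hv
      exact ih hd hv.1 hv.2

theorem deltaMin_lt_quarter (hW : Assumption1 G W) (hG : G.Connected) (hn : 3 ≤ n) :
    deltaMin G W < 1 / 4 := by
  have : Nontrivial (Fin n) := Fin.nontrivial_iff_two_le.2 (by omega)
  let p : Fin n := ⟨0, by omega⟩
  obtain ⟨q, hpq⟩ := hG.preconnected.exists_adj_of_nontrivial p
  obtain ⟨c, hc⟩ : ∃ c, c ∉ ({p, q} : Finset (Fin n)) := by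
    by_contra! h
    have := card_le_card (fun z _ => h z : (univ : Finset (Fin n)) ⊆ {p, q})
    rw [card_univ, Fintype.card_fin] at this
    have := card_le_two (a := p) (b := q)
    omega
  simp only [mem_insert, mem_singleton, not_or] at hc
  obtain ⟨z, a, b, hab, hza, hzb⟩ := (hG.preconnected c p).some.exists_adj_adj hpq rfl hc.1 hc.2
  have := hW.add_le_one_sub_diag hab hza.ne' hzb.ne'
  linarith [deltaMin_le_of_adj (W := W) hza, deltaMin_le_of_adj (W := W) hzb, hW.half_lt_diag z]

end EdgeWeights

theorem SimpleGraph.Walk.apply_le_pow_length_mul {V : Type*} {G : SimpleGraph V} {f : V → ℝ}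
    {c : ℝ} (hc : 0 ≤ c) (hf : ∀ p q, G.Adj p q → f q ≤ c * f p) {u v : V} (w : G.Walk u v) :
    f v ≤ c ^ w.length * f u := by
  induction w with
  | nil => simp
  | cons h _ ih =>
    rw [Walk.length_cons, pow_succ, mul_assoc]
    exact ih.trans (mul_le_mul_of_nonneg_left (hf _ _ h) (pow_nonneg hc _))

/-- A path from `h` has at most `card V - 2` edges after its first one, which ends at a neighbour
of `h`. -/
theorem SimpleGraph.Connected.apply_le_pow_mul {V : Type*} [Fintype V] {G : SimpleGraph V}
    (hG : G.Connected) {f : V → ℝ} {c B : ℝ} (hc : 1 ≤ c) (hB : 0 ≤ B)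
    (hf : ∀ p q, G.Adj p q → f q ≤ c * f p) {h : V} (hh : f h ≤ B)
    (hnbr : ∀ u, G.Adj h u → f u ≤ B) (v : V) : f v ≤ c ^ (Fintype.card V - 2) * B := by
  obtain ⟨w, hw⟩ := hG.exists_isPath h v
  cases w with
  | nil => exact hh.trans (le_mul_of_one_le_left hB (one_le_pow₀ hc))
  | cons hadj t =>
    have hlen := hw.length_lt
    rw [Walk.length_cons] at hlen
    calc f v ≤ c ^ t.length * f _ := t.apply_le_pow_length_mul (by linarith) hf
      _ ≤ c ^ t.length * B := mul_le_mul_of_nonneg_left (hnbr _ hadj) (pow_nonneg (by linarith) _)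
      _ ≤ c ^ (Fintype.card V - 2) * B :=
        mul_le_mul_of_nonneg_right (pow_le_pow_right₀ hc (by omega)) hB

theorem add_sum_range_le_of_succ_add_le {f d : ℕ → ℝ} {s : ℕ}
    (h : ∀ j < s, f (j + 1) + d j ≤ f j) : f s + ∑ j ∈ range s, d j ≤ f 0 := by
  induction s with
  | zero => simp
  | succ s ih =>
    rw [sum_range_succ]
    linarith [ih fun j hj => h j (by omega), h s (by omega)]

theorem max_sub_zero_add_min (a b : ℝ) : max (a - b) 0 + min a b = a := by
  rcases le_total a b with h | h
  · rw [max_eq_right (by linarith), min_eq_left h, zero_add]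
  · rw [max_eq_left (by linarith), min_eq_right h]
    ring

/-- Split `[0, t)` at its last point of `P`: the window after it avoids `P`. -/
theorem le_card_filter_mul_add {P : ℕ → Prop} [DecidablePred P] {T : ℕ} (t : ℕ)
    (hgap : ∀ a s, a + s ≤ t → (∀ j, a ≤ j → j < a + s → ¬P j) → s ≤ T) :
    t ≤ ((range t).filter P).card * (T + 1) + T := by
  induction t using Nat.strong_induction_on with
  | _ t ih =>
  by_cases hne : ((range t).filter P).Nonempty
  · set p := ((range t).filter P).max' hne
    have hp := mem_filter.1 (max'_mem _ hne)
    rw [mem_range] at hp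
    have hlast : t ≤ p + 1 + T := by
      have := hgap (p + 1) (t - (p + 1)) (by omega) fun j hj hjt hPj => by
        have : j ≤ p := le_max' _ j (mem_filter.2 ⟨mem_range.2 (by omega), hPj⟩)
        omega
      omega
    have hcard : ((range p).filter P).card + 1 ≤ ((range t).filter P).card := by
      rw [← card_insert_of_notMem (s := (range p).filter P) (a := p) (by simp)]
      exact card_le_card (insert_subset (mem_filter.2 ⟨mem_range.2 hp.1, hp.2⟩)
        (filter_subset_filter _ (range_subset_range.2 hp.1.le)))
    have hp' := ih p hp.1 fun a s has => hgap a s (by omega)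
    have := Nat.mul_le_mul_right (T + 1) hcard
    linarith
  · have := hgap 0 t (by omega) fun j _ hj hPj =>
      hne ⟨j, mem_filter.2 ⟨mem_range.2 (by omega), hPj⟩⟩
    omega

section Dynamics

variable {n : ℕ} {G : SimpleGraph (Fin n)} {W : Matrix (Fin n) (Fin n) ℝ} {x : ℕ → Fin n → ℝ}
  {γ : ℝ}

theorem Traj.succ_eq (hx : Traj W x) (k : ℕ) (i : Fin n) :
    x (k + 1) i = Int.fract (x k i) + ∑ j, W i j * ⌊x k j⌋ := by
  rw [hx k i, ← Int.self_sub_floor]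
  ring

theorem GammaSetup.pos (hγ : GammaSetup W x γ) : 0 < γ := hγ.1

theorem GammaSetup.fract_gap (hγ : GammaSetup W x γ) (k : ℕ) (i : Fin n)
    (h : 1 - W i i < Int.fract (x k i)) : 1 - W i i + 2 * γ ≤ Int.fract (x k i) := by
  have := (hγ.2 i k).1 h
  rw [Int.self_sub_floor] at this
  linarith

theorem GammaSetup.half_add_le_diag (hγ : GammaSetup W x γ) (i : Fin n) :
    1 / 2 + 2 * γ ≤ W i i := by
  linarith [(hγ.2 i 0).2.2.2]

theorem GammaSetup.alpha_le (hγ : GammaSetup W x γ) (i : Fin n) : alpha W γ i ≤ 1 / 2 - γ := by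
  linarith [hγ.half_add_le_diag i, show alpha W γ i = 1 - W i i + γ from rfl]

theorem GammaSetup.alpha_pos (hγ : GammaSetup W x γ) (hW : Assumption1 G W) (i : Fin n) :
    0 < alpha W γ i := by
  linarith [hγ.pos, hW.diag_le_one i, show alpha W γ i = 1 - W i i + γ from rfl]

variable (hn0 : 0 < n)

theorem mfun_le_floor (k : ℕ) (i : Fin n) : mfun hn0 x k ≤ ⌊x k i⌋ :=
  inf'_le _ (mem_univ i)

theorem exists_floor_eq_mfun (k : ℕ) : ∃ i, ⌊x k i⌋ = mfun hn0 x k := by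
  obtain ⟨i, _, h⟩ := exists_mem_eq_inf' (univ_nonempty_iff.2 ⟨⟨0, hn0⟩⟩) fun i => ⌊x k i⌋
  exact ⟨i, h.symm⟩

theorem mfun_le_self (k : ℕ) (i : Fin n) : (mfun hn0 x k : ℝ) ≤ x k i :=
  (Int.cast_le.2 (mfun_le_floor hn0 k i)).trans (Int.floor_le _)

theorem mfun_monotone (hW : Assumption1 G W) (hx : Traj W x) : Monotone (mfun hn0 x) := by
  refine monotone_nat_of_le_succ fun k => le_inf' _ _ fun i _ => Int.le_floor.2 ?_
  have hsum : ∑ j, W i j * (mfun hn0 x k : ℝ) ≤ ∑ j, W i j * ⌊x k j⌋ :=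
    sum_le_sum fun j _ => mul_le_mul_of_nonneg_left
      (Int.cast_le.2 (mfun_le_floor hn0 k j)) (hW.nonneg i j)
  rw [hW.sum_mul_const] at hsum
  rw [hx.succ_eq]
  linarith [Int.fract_nonneg (x k i)]

end Dynamics

namespace QuantizedConsensus

variable {n : ℕ} {G : SimpleGraph (Fin n)} {W : Matrix (Fin n) (Fin n) ℝ} {x : ℕ → Fin n → ℝ}
  {γ : ℝ} {k : ℕ} {M : ℤ}

/-- Floors clipped from below at `M + 1`: a node at the minimum level `M` is treated as if it sat
one level higher, its deficit being accounted for by `lowWeight`. -/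
noncomputable def clip (M : ℤ) (u : Fin n → ℝ) (j : Fin n) : ℝ := max (⌊u j⌋ : ℝ) (M + 1)

noncomputable def lowWeight (W : Matrix (Fin n) (Fin n) ℝ) (M : ℤ) (u : Fin n → ℝ) (i : Fin n) :
    ℝ :=
  ∑ j ∈ univ.filter fun j => ⌊u j⌋ = M, W i j

/-- Membership in `X4 ∪ X5 ∪ X6` relative to the level `M`. -/
def IsUpper (W : Matrix (Fin n) (Fin n) ℝ) (γ : ℝ) (M : ℤ) (u : Fin n → ℝ) (i : Fin n) : Prop :=
  (M : ℝ) + 1 + alpha W γ i < u i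

noncomputable def excess (W : Matrix (Fin n) (Fin n) ℝ) (γ : ℝ) (M : ℤ) (u : Fin n → ℝ)
    (i : Fin n) : ℝ :=
  max (u i - M - 1 - alpha W γ i) 0

noncomputable def potential (W : Matrix (Fin n) (Fin n) ℝ) (γ : ℝ) (M : ℤ) (u : Fin n → ℝ) : ℝ :=
  ∑ i, excess W γ M u i

noncomputable def budget (W : Matrix (Fin n) (Fin n) ℝ) (γ : ℝ) (M : ℤ) (u : Fin n → ℝ)
    (i : Fin n) : ℝ :=
  excess W γ M u i + ∑ j, W i j * (clip M u j - clip M u i)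

def Witness (G : SimpleGraph (Fin n)) (W : Matrix (Fin n) (Fin n) ℝ) (γ : ℝ) (M : ℤ)
    (u : Fin n → ℝ) : Prop :=
  ∃ i j, G.Adj i j ∧
    (⌊u i⌋ = M ∧ IsUpper W γ M u j ∨ ⌊u i⌋ = M + 1 ∧ ¬IsUpper W γ M u i ∧ M + 2 ≤ ⌊u j⌋)

section Clip

variable {u : Fin n → ℝ} {i j : Fin n}

theorem clip_eq_of_floor_le (h : ⌊u j⌋ ≤ M + 1) : clip M u j = M + 1 :=
  max_eq_right (by exact_mod_cast h)

theorem clip_eq_of_le_floor (h : M + 1 ≤ ⌊u j⌋) : clip M u j = ⌊u j⌋ :=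
  max_eq_left (by exact_mod_cast h)

theorem le_clip (j : Fin n) : (M : ℝ) + 1 ≤ clip M u j := le_max_right _ _

theorem lowWeight_nonneg (hW : Assumption1 G W) (i : Fin n) : 0 ≤ lowWeight W M u i :=
  sum_nonneg fun j _ => hW.nonneg i j

theorem le_lowWeight (hW : Assumption1 G W) (i : Fin n) (h : ⌊u j⌋ = M) :
    W i j ≤ lowWeight W M u i :=
  single_le_sum (fun l _ => hW.nonneg i l) (mem_filter.2 ⟨mem_univ j, h⟩)

theorem sum_mul_floor_eq (hM : ∀ j, M ≤ ⌊u j⌋) (i : Fin n) :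
    ∑ j, W i j * ⌊u j⌋ = ∑ j, W i j * clip M u j - lowWeight W M u i := by
  rw [lowWeight, sum_filter, ← sum_sub_distrib]
  refine sum_congr rfl fun j _ => ?_
  rcases (hM j).eq_or_lt with h | h
  · rw [if_pos h.symm, clip_eq_of_floor_le (by omega), ← h]
    ring
  · rw [if_neg h.ne', clip_eq_of_le_floor h, sub_zero]

theorem budget_eq (hW : Assumption1 G W) (i : Fin n) :
    budget W γ M u i = excess W γ M u i + ∑ j, W i j * clip M u j - clip M u i := by
  simp only [budget, mul_sub, sum_sub_distrib, hW.sum_mul_const]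
  ring

theorem sum_budget (hW : Assumption1 G W) :
    ∑ i, budget W γ M u i = potential W γ M u := by
  rw [potential, ← add_zero (∑ i, excess W γ M u i), ← hW.sum_sum_mul_sub (clip M u)]
  exact sum_add_distrib

end Clip

theorem succ_eq_clip (hx : Traj W x) (hM : ∀ j, M ≤ ⌊x k j⌋) (i : Fin n) :
    x (k + 1) i =
      Int.fract (x k i) + ∑ j, W i j * clip M (x k) j - lowWeight W M (x k) i := by
  rw [hx.succ_eq, sum_mul_floor_eq hM]
  ring

theorem le_sum_mul_clip (hW : Assumption1 G W) (u : Fin n → ℝ) (i : Fin n) :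
    (M : ℝ) + 1 ≤ ∑ j, W i j * clip M u j :=
  (hW.sum_mul_const i _).symm.le.trans
    (sum_le_sum fun j _ => mul_le_mul_of_nonneg_left (le_clip j) (hW.nonneg i j))

theorem excess_eq_zero_of_not_isUpper {u : Fin n → ℝ} {i : Fin n} (h : ¬IsUpper W γ M u i) :
    excess W γ M u i = 0 :=
  max_eq_right (by unfold IsUpper at h; linarith)

theorem excess_eq_of_isUpper {u : Fin n → ℝ} {i : Fin n} (h : IsUpper W γ M u i) :
    excess W γ M u i = u i - M - 1 - alpha W γ i :=
  max_eq_left (by unfold IsUpper at h; linarith)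

section OneStep

variable {i : Fin n}

theorem floor_le_of_not_isUpper (hγ : GammaSetup W x γ) (h : ¬IsUpper W γ M (x k) i) :
    ⌊x k i⌋ ≤ M + 1 := by
  have hlt : x k i < ((M + 1 + 1 : ℤ) : ℝ) := by
    unfold IsUpper at h
    push_cast
    linarith [hγ.alpha_le i, hγ.pos]
  exact Int.lt_add_one_iff.1 (Int.floor_lt.2 hlt)

theorem isUpper_of_le_floor (hγ : GammaSetup W x γ) (h : M + 2 ≤ ⌊x k i⌋) :
    IsUpper W γ M (x k) i := by
  have : ((M + 2 : ℤ) : ℝ) ≤ x k i := Int.le_floor.1 h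
  unfold IsUpper
  push_cast at this
  linarith [hγ.alpha_le i, hγ.pos]

theorem le_floor_of_isUpper (hW : Assumption1 G W) (hγ : GammaSetup W x γ)
    (h : IsUpper W γ M (x k) i) : M + 1 ≤ ⌊x k i⌋ :=
  Int.le_floor.2 (by unfold IsUpper at h; push_cast; linarith [hγ.alpha_pos hW i])

/-- Below the upper set the update loses at least `γ` against `αᵢ`: a node at the minimum level
keeps its own weight `wᵢᵢ` in `lowWeight`, and a node one level up has fractional part at most
`1 - wᵢᵢ` by the `γ`-gap. -/
theorem fract_sub_alpha_sub_lowWeight_le (hW : Assumption1 G W) (hγ : GammaSetup W x γ)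
    (hM : ∀ j, M ≤ ⌊x k j⌋) (h : ¬IsUpper W γ M (x k) i) :
    Int.fract (x k i) - alpha W γ i - lowWeight W M (x k) i ≤ -γ := by
  have hα : alpha W γ i = 1 - W i i + γ := rfl
  rcases (hM i).eq_or_lt with hi | hi
  · linarith [le_lowWeight hW i hi.symm, Int.fract_lt_one (x k i)]
  · have hi1 : ⌊x k i⌋ = M + 1 := le_antisymm (floor_le_of_not_isUpper hγ h) (by omega)
    have hfr : Int.fract (x k i) ≤ alpha W γ i := by
      unfold IsUpper at h
      rw [← Int.self_sub_floor, hi1]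
      push_cast
      linarith
    have hle : Int.fract (x k i) ≤ 1 - W i i := by
      by_contra! hc
      linarith [hγ.fract_gap k i hc]
    linarith [lowWeight_nonneg (M := M) (u := x k) hW i]

theorem budget_eq_of_not_isUpper (hW : Assumption1 G W) (hγ : GammaSetup W x γ)
    (h : ¬IsUpper W γ M (x k) i) :
    budget W γ M (x k) i = ∑ j, W i j * clip M (x k) j - (M + 1) := by
  rw [budget_eq hW, excess_eq_zero_of_not_isUpper h,
    clip_eq_of_floor_le (floor_le_of_not_isUpper hγ h), zero_add]

theorem excess_succ_add_min_le_of_not_isUpper (hW : Assumption1 G W) (hx : Traj W x)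
    (hγ : GammaSetup W x γ) (hM : ∀ j, M ≤ ⌊x k j⌋) (h : ¬IsUpper W γ M (x k) i) :
    excess W γ M (x (k + 1)) i + min (budget W γ M (x k) i) γ ≤ budget W γ M (x k) i := by
  have hstep : x (k + 1) i - M - 1 - alpha W γ i ≤ budget W γ M (x k) i - γ := by
    rw [succ_eq_clip hx hM, budget_eq_of_not_isUpper hW hγ h]
    linarith [fract_sub_alpha_sub_lowWeight_le hW hγ hM h]
  have hex : excess W γ M (x (k + 1)) i ≤ max (budget W γ M (x k) i - γ) 0 :=
    max_le_max hstep le_rfl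
  linarith [max_sub_zero_add_min (budget W γ M (x k) i) γ]

theorem gamma_le_budget_of_isUpper (hW : Assumption1 G W) (hγ : GammaSetup W x γ)
    (h : IsUpper W γ M (x k) i) : γ ≤ budget W γ M (x k) i := by
  have hα : alpha W γ i = 1 - W i i + γ := rfl
  have hcl := clip_eq_of_le_floor (le_floor_of_isUpper hW hγ h)
  have hb : budget W γ M (x k) i =
      Int.fract (x k i) + ∑ j, W i j * (clip M (x k) j - (M + 1)) - alpha W γ i := by
    rw [budget_eq hW, excess_eq_of_isUpper h, hcl, ← Int.self_sub_floor]
    simp only [mul_sub, sum_sub_distrib, hW.sum_mul_const]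
    ring
  have hdiag : W i i * (⌊x k i⌋ - (M + 1)) ≤ ∑ j, W i j * (clip M (x k) j - (M + 1)) :=
    hcl ▸ hW.mul_le_sum_mul (fun j => sub_nonneg.2 (le_clip j)) i i
  rw [hb]
  rcases (show ⌊x k i⌋ = M + 1 ∨ M + 2 ≤ ⌊x k i⌋ by have := le_floor_of_isUpper hW hγ h; omega)
    with h1 | h2
  · have hfr : alpha W γ i < Int.fract (x k i) := by
      unfold IsUpper at h
      rw [← Int.self_sub_floor, h1]
      push_cast
      linarith
    have := hγ.fract_gap k i (by linarith [hγ.pos])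
    rw [h1] at hdiag
    push_cast at hdiag
    linarith
  · have h2' : (M : ℝ) + 2 ≤ ⌊x k i⌋ := by exact_mod_cast h2
    have : W i i ≤ W i i * (⌊x k i⌋ - (M + 1)) :=
      le_mul_of_one_le_right (hW.nonneg i i) (by linarith)
    linarith [hγ.half_add_le_diag i, hγ.alpha_le i, Int.fract_nonneg (x k i), hγ.pos]

theorem budget_eq_of_isUpper (hW : Assumption1 G W) (hx : Traj W x) (hγ : GammaSetup W x γ)
    (hM : ∀ j, M ≤ ⌊x k j⌋) (h : IsUpper W γ M (x k) i) :
    budget W γ M (x k) i = x (k + 1) i - M - 1 - alpha W γ i + lowWeight W M (x k) i := by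
  rw [budget_eq hW, excess_eq_of_isUpper h, clip_eq_of_le_floor (le_floor_of_isUpper hW hγ h),
    succ_eq_clip hx hM, ← Int.self_sub_floor]
  ring

theorem excess_succ_add_min_le_of_isUpper (hW : Assumption1 G W) (hx : Traj W x)
    (hγ : GammaSetup W x γ) (hM : ∀ j, M ≤ ⌊x k j⌋) (h : IsUpper W γ M (x k) i) :
    excess W γ M (x (k + 1)) i + min (lowWeight W M (x k) i) γ ≤ budget W γ M (x k) i := by
  have hb := budget_eq_of_isUpper hW hx hγ hM h
  have hex : excess W γ M (x (k + 1)) i =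
      max (budget W γ M (x k) i - lowWeight W M (x k) i) 0 := by
    rw [hb, add_sub_cancel_right]
    rfl
  have hmin : min (lowWeight W M (x k) i) γ ≤
      min (budget W γ M (x k) i) (lowWeight W M (x k) i) := by
    rw [min_comm (budget W γ M (x k) i)]
    exact min_le_min le_rfl (gamma_le_budget_of_isUpper hW hγ h)
  linarith [max_sub_zero_add_min (budget W γ M (x k) i) (lowWeight W M (x k) i)]

theorem excess_succ_le_budget (hW : Assumption1 G W) (hx : Traj W x) (hγ : GammaSetup W x γ)
    (hM : ∀ j, M ≤ ⌊x k j⌋) (i : Fin n) :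
    excess W γ M (x (k + 1)) i ≤ budget W γ M (x k) i := by
  by_cases h : IsUpper W γ M (x k) i
  · have := excess_succ_add_min_le_of_isUpper hW hx hγ hM h
    have : 0 ≤ min (lowWeight W M (x k) i) γ := le_min (lowWeight_nonneg hW i) hγ.pos.le
    linarith
  · have := excess_succ_add_min_le_of_not_isUpper hW hx hγ hM h
    have hb : 0 ≤ budget W γ M (x k) i := by
      rw [budget_eq_of_not_isUpper hW hγ h]
      linarith [le_sum_mul_clip hW (M := M) (x k) i]
    have : 0 ≤ min (budget W γ M (x k) i) γ := le_min hb hγ.pos.le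
    linarith

theorem deltaMin_le_budget (hW : Assumption1 G W) {j : Fin n} (hij : G.Adj i j)
    (hi : ⌊x k i⌋ = M + 1) (hiu : ¬IsUpper W γ M (x k) i) (hj : M + 2 ≤ ⌊x k j⌋) :
    deltaMin G W ≤ budget W γ M (x k) i := by
  have hci : clip M (x k) i = M + 1 := clip_eq_of_floor_le hi.le
  have hcj : (M : ℝ) + 2 ≤ clip M (x k) j := by
    rw [clip_eq_of_le_floor (by omega)]
    exact_mod_cast hj
  have hterm := hW.mul_le_sum_mul (f := fun l => clip M (x k) l - clip M (x k) i)
    (fun l => by rw [hci]; exact sub_nonneg.2 (le_clip l)) i j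
  have : W i j ≤ W i j * (clip M (x k) j - clip M (x k) i) :=
    le_mul_of_one_le_right (hW.nonneg i j) (by rw [hci]; linarith)
  rw [budget, excess_eq_zero_of_not_isUpper hiu, zero_add]
  linarith [deltaMin_le_of_adj (W := W) hij]

theorem exists_excess_succ_add_le_of_witness (hW : Assumption1 G W) (hx : Traj W x)
    (hγ : GammaSetup W x γ) (hM : ∀ j, M ≤ ⌊x k j⌋) (hwit : Witness G W γ M (x k)) :
    ∃ i, excess W γ M (x (k + 1)) i + min γ (deltaMin G W) ≤ budget W γ M (x k) i := by
  obtain ⟨i, j, hij, ⟨hi, hj⟩ | ⟨hi, hiu, hj⟩⟩ := hwit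
  · have hδ : deltaMin G W ≤ lowWeight W M (x k) j :=
      (deltaMin_le_of_adj hij.symm).trans (le_lowWeight hW j hi)
    have := excess_succ_add_min_le_of_isUpper hW hx hγ hM hj
    exact ⟨j, by linarith [(min_comm γ _).le.trans (min_le_min hδ le_rfl)]⟩
  · have hδ := deltaMin_le_budget hW hij hi hiu hj
    have := excess_succ_add_min_le_of_not_isUpper hW hx hγ hM hiu
    exact ⟨i, by linarith [(min_comm γ _).le.trans (min_le_min hδ le_rfl)]⟩

theorem potential_succ_le (hW : Assumption1 G W) (hx : Traj W x) (hγ : GammaSetup W x γ)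
    (hM : ∀ j, M ≤ ⌊x k j⌋) : potential W γ M (x (k + 1)) ≤ potential W γ M (x k) := by
  rw [← sum_budget hW (u := x k)]
  exact sum_le_sum fun i _ => excess_succ_le_budget hW hx hγ hM i

theorem potential_succ_add_le_of_witness (hW : Assumption1 G W) (hx : Traj W x)
    (hγ : GammaSetup W x γ) (hM : ∀ j, M ≤ ⌊x k j⌋) (hwit : Witness G W γ M (x k)) :
    potential W γ M (x (k + 1)) + min γ (deltaMin G W) ≤ potential W γ M (x k) := by
  obtain ⟨i, hi⟩ := exists_excess_succ_add_le_of_witness hW hx hγ hM hwit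
  have hex := add_sum_erase univ (fun j => excess W γ M (x (k + 1)) j) (mem_univ i)
  have hbud := add_sum_erase univ (fun j => budget W γ M (x k) j) (mem_univ i)
  rw [← sum_budget hW (u := x k), potential]
  have := sum_le_sum fun j (_ : j ∈ univ.erase i) => excess_succ_le_budget hW hx hγ hM j
  linarith

end OneStep

section Passive

variable {i : Fin n}

theorem floor_le_of_not_witness (hW : Assumption1 G W) (hγ : GammaSetup W x γ)
    (hM : ∀ j, M ≤ ⌊x k j⌋) (hnw : ¬Witness G W γ M (x k)) (hi : ¬IsUpper W γ M (x k) i)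
    {j : Fin n} (hij : W i j ≠ 0) : ⌊x k j⌋ ≤ M + 1 := by
  by_cases hji : j = i
  · exact hji ▸ floor_le_of_not_isUpper hγ hi
  by_contra! hj
  have hadj := hW.adj_of_ne_zero (Ne.symm hji) hij
  rcases (show ⌊x k i⌋ = M ∨ ⌊x k i⌋ = M + 1 by
      have := floor_le_of_not_isUpper hγ hi; have := hM i; omega) with h | h
  · exact hnw ⟨i, j, hadj, Or.inl ⟨h, isUpper_of_le_floor hγ (by omega)⟩⟩
  · exact hnw ⟨i, j, hadj, Or.inr ⟨h, hi, by omega⟩⟩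

theorem succ_le_of_floor_le (hW : Assumption1 G W) (hx : Traj W x) (hM : ∀ j, M ≤ ⌊x k j⌋)
    (h : ∀ j, W i j ≠ 0 → ⌊x k j⌋ ≤ M + 1) :
    x (k + 1) i ≤ Int.fract (x k i) + (M + 1) - lowWeight W M (x k) i := by
  have hsum : ∑ j, W i j * clip M (x k) j ≤ ∑ j, W i j * ((M : ℝ) + 1) :=
    sum_le_sum fun j _ => by
      by_cases hw : W i j = 0
      · simp [hw]
      · rw [clip_eq_of_floor_le (h j hw)]
  rw [hW.sum_mul_const] at hsum
  rw [succ_eq_clip hx hM]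
  linarith

theorem not_isUpper_succ (hW : Assumption1 G W) (hx : Traj W x) (hγ : GammaSetup W x γ)
    (hM : ∀ j, M ≤ ⌊x k j⌋) (hi : ¬IsUpper W γ M (x k) i)
    (h : ∀ j, W i j ≠ 0 → ⌊x k j⌋ ≤ M + 1) : ¬IsUpper W γ M (x (k + 1)) i := by
  unfold IsUpper
  push Not
  linarith [succ_le_of_floor_le hW hx hM h, fract_sub_alpha_sub_lowWeight_le hW hγ hM hi, hγ.pos]

theorem lowWeight_eq_zero_of_not_witness (hW : Assumption1 G W) (hγ : GammaSetup W x γ)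
    (hnw : ¬Witness G W γ M (x k)) (hi : IsUpper W γ M (x k) i) :
    lowWeight W M (x k) i = 0 := by
  refine sum_eq_zero fun j hj => ?_
  rw [mem_filter] at hj
  by_contra hw
  have hji : j ≠ i := by
    rintro rfl
    have := le_floor_of_isUpper hW hγ hi
    omega
  exact hnw ⟨j, i, (hW.adj_of_ne_zero hji.symm hw).symm, Or.inl ⟨hj.2, hi⟩⟩

theorem isUpper_succ_of_not_witness (hW : Assumption1 G W) (hx : Traj W x)
    (hγ : GammaSetup W x γ) (hM : ∀ j, M ≤ ⌊x k j⌋) (hnw : ¬Witness G W γ M (x k))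
    (hi : IsUpper W γ M (x k) i) : IsUpper W γ M (x (k + 1)) i := by
  have hb := budget_eq_of_isUpper hW hx hγ hM hi
  rw [lowWeight_eq_zero_of_not_witness hW hγ hnw hi] at hb
  unfold IsUpper
  linarith [gamma_le_budget_of_isUpper hW hγ hi, hγ.pos]

theorem succ_sub_le_of_not_witness (hW : Assumption1 G W) (hx : Traj W x)
    (hγ : GammaSetup W x γ) (hM : ∀ j, M ≤ ⌊x k j⌋) (hnw : ¬Witness G W γ M (x k))
    {p q : Fin n} (hpq : G.Adj p q) (hp : ¬IsUpper W γ M (x k) p) :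
    x (k + 1) p - x k p ≤ 1 / 2 * (if ⌊x k p⌋ = M then 1 else 0) -
      deltaMin G W * (if ⌊x k p⌋ = M + 1 ∧ ⌊x k q⌋ = M then 1 else 0) := by
  have hstep := succ_le_of_floor_le hW hx hM fun j => floor_le_of_not_witness hW hγ hM hnw hp
  rw [← Int.self_sub_floor] at hstep
  rcases (show ⌊x k p⌋ = M ∨ ⌊x k p⌋ = M + 1 by
      have := floor_le_of_not_isUpper hγ hp; have := hM p; omega) with h | h
  · rw [if_pos h, if_neg (by omega)]
    rw [h] at hstep
    linarith [le_lowWeight (M := M) hW p h, hW.half_lt_diag p]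
  · rw [if_neg (by omega)]
    rw [h] at hstep
    push_cast at hstep
    split_ifs with hq
    · linarith [le_lowWeight hW p hq.2, deltaMin_le_of_adj (W := W) hpq]
    · linarith [lowWeight_nonneg (M := M) (u := x k) hW p]

end Passive

theorem le_floor_of_mfun_eq (hn0 : 0 < n) (h : mfun hn0 x k = M) (i : Fin n) :
    M ≤ ⌊x k i⌋ :=
  h ▸ mfun_le_floor hn0 k i

noncomputable def lowCount (x : ℕ → Fin n → ℝ) (M : ℤ) (a s : ℕ) (v : Fin n) : ℕ :=
  ((range s).filter fun j => ⌊x (a + j) v⌋ = M).card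

section Run

variable {a s : ℕ} (hn0 : 0 < n)

theorem isUpper_iff_of_run (hW : Assumption1 G W) (hx : Traj W x) (hγ : GammaSetup W x γ)
    (hrun : ∀ j ≤ s, mfun hn0 x (a + j) = M) (hnw : ∀ j < s, ¬Witness G W γ M (x (a + j)))
    {j : ℕ} (hj : j ≤ s) (v : Fin n) :
    IsUpper W γ M (x (a + j)) v ↔ IsUpper W γ M (x a) v := by
  induction j with
  | zero => rfl
  | succ j ih =>
    have hM := le_floor_of_mfun_eq hn0 (hrun j (by omega))
    have hnwj := hnw j (by omega)
    rw [← ih (by omega)]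
    refine ⟨fun h => ?_, isUpper_succ_of_not_witness hW hx hγ hM hnwj⟩
    by_contra h'
    exact not_isUpper_succ hW hx hγ hM h' (fun l => floor_le_of_not_witness hW hγ hM hnwj h') h

theorem le_sum_lowCount (hrun : ∀ j ≤ s, mfun hn0 x (a + j) = M) :
    s ≤ ∑ v, lowCount x M a s v := by
  simp only [lowCount, card_filter]
  rw [sum_comm]
  calc s = ∑ _j ∈ range s, 1 := by simp
    _ ≤ _ := sum_le_sum fun j hj => ?_
  obtain ⟨v, hv⟩ := exists_floor_eq_mfun hn0 (x := x) (a + j)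
  rw [hrun j (by simp at hj; omega)] at hv
  calc 1 = if ⌊x (a + j) v⌋ = M then 1 else 0 := by rw [if_pos hv]
    _ ≤ _ := single_le_sum (f := fun v => if ⌊x (a + j) v⌋ = M then 1 else 0)
      (fun _ _ => Nat.zero_le _) (mem_univ v)

theorem lowCount_eq_zero_of_isUpper (hW : Assumption1 G W) (hx : Traj W x)
    (hγ : GammaSetup W x γ) (hrun : ∀ j ≤ s, mfun hn0 x (a + j) = M)
    (hnw : ∀ j < s, ¬Witness G W γ M (x (a + j))) {v h : Fin n}
    (hh : IsUpper W γ M (x a) h) (hv : v = h ∨ G.Adj v h) : lowCount x M a s v = 0 := by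
  refine card_eq_zero.2 (filter_eq_empty_iff.2 fun j hj hvM => ?_)
  rw [mem_range] at hj
  have hhj := (isUpper_iff_of_run hn0 hW hx hγ hrun hnw hj.le h).2 hh
  rcases hv with rfl | hadj
  · have := le_floor_of_isUpper hW hγ hhj
    omega
  · exact hnw j hj ⟨v, h, hadj, Or.inl ⟨hvM, hhj⟩⟩

/-- Along a witness-free run a non-upper node `p` rises by at most `1/2` per step at the minimum
level and falls by at least `δ` whenever it sits one level up next to a neighbour `q` at the
minimum; it starts below `M + 3/2` and never drops below `M`. -/
theorem two_mul_deltaMin_mul_le (hW : Assumption1 G W) (hx : Traj W x) (hγ : GammaSetup W x γ)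
    (hrun : ∀ j ≤ s, mfun hn0 x (a + j) = M) (hnw : ∀ j < s, ¬Witness G W γ M (x (a + j)))
    {p q : Fin n} (hpq : G.Adj p q) (hp : ¬IsUpper W γ M (x a) p) :
    2 * deltaMin G W *
        ∑ j ∈ range s, (if ⌊x (a + j) p⌋ = M + 1 ∧ ⌊x (a + j) q⌋ = M then 1 else 0) ≤
      (lowCount x M a s p : ℝ) + 3 := by
  have htel := add_sum_range_le_of_succ_add_le (f := fun j => x (a + j) p)
    (d := fun j => deltaMin G W * (if ⌊x (a + j) p⌋ = M + 1 ∧ ⌊x (a + j) q⌋ = M then 1 else 0) -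
      1 / 2 * (if ⌊x (a + j) p⌋ = M then 1 else 0)) fun j hj => by
    have := succ_sub_le_of_not_witness hW hx hγ (le_floor_of_mfun_eq hn0 (hrun j hj.le))
      (hnw j hj) hpq (by rwa [isUpper_iff_of_run hn0 hW hx hγ hrun hnw hj.le])
    rw [← add_assoc]
    linarith
  simp only [sum_sub_distrib, ← mul_sum, ← natCast_card_filter, add_zero] at htel
  have hstart : x a p ≤ M + 1 + alpha W γ p := not_lt.1 hp
  have hend : (M : ℝ) ≤ x (a + s) p := hrun s le_rfl ▸ mfun_le_self hn0 (a + s) p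
  rw [lowCount, ← natCast_card_filter]
  linarith [hγ.alpha_le p, hγ.pos]

/-- Each visit of `q` to the minimum level is a visit of `p`, or (`p` being one level up) a step
where `p` falls by `δ`. -/
theorem lowCount_add_three_le (hW : Assumption1 G W) (hx : Traj W x) (hγ : GammaSetup W x γ)
    (hG : G.Connected) (hn : 1 < n) (hrun : ∀ j ≤ s, mfun hn0 x (a + j) = M)
    (hnw : ∀ j < s, ¬Witness G W γ M (x (a + j))) {p q : Fin n} (hpq : G.Adj p q) :
    (lowCount x M a s q : ℝ) + 3 ≤
      (1 / (2 * deltaMin G W) + 1) * ((lowCount x M a s p : ℝ) + 3) := by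
  have hδ := deltaMin_pos hW hG hn
  have hLp : (0 : ℝ) ≤ lowCount x M a s p := Nat.cast_nonneg _
  by_cases hp : IsUpper W γ M (x a) p
  · rw [lowCount_eq_zero_of_isUpper hn0 hW hx hγ hrun hnw hp (Or.inr hpq.symm), Nat.cast_zero]
    have : 0 ≤ 1 / (2 * deltaMin G W) := by positivity
    nlinarith
  set C := ∑ j ∈ range s, if ⌊x (a + j) p⌋ = M + 1 ∧ ⌊x (a + j) q⌋ = M then (1 : ℝ) else 0
  have hC : C ≤ ((lowCount x M a s p : ℝ) + 3) / (2 * deltaMin G W) := by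
    rw [le_div_iff₀ (by positivity), mul_comm]
    exact two_mul_deltaMin_mul_le hn0 hW hx hγ hrun hnw hpq hp
  have hq : (lowCount x M a s q : ℝ) ≤ lowCount x M a s p + C := by
    simp only [lowCount, natCast_card_filter, C, ← sum_add_distrib]
    refine sum_le_sum fun j hj => ?_
    have hj : j ≤ s := by simp at hj; omega
    have := floor_le_of_not_isUpper hγ (by rwa [isUpper_iff_of_run hn0 hW hx hγ hrun hnw hj])
    have := le_floor_of_mfun_eq hn0 (hrun j hj) p
    split_ifs <;> first | (exfalso; omega) | norm_num
  calc (lowCount x M a s q : ℝ) + 3 ≤ lowCount x M a s p + 3 +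
        ((lowCount x M a s p : ℝ) + 3) / (2 * deltaMin G W) := by linarith
    _ = _ := by ring

theorem run_length_le (hW : Assumption1 G W) (hx : Traj W x) (hγ : GammaSetup W x γ)
    (hG : G.Connected) (hn : 1 < n) (hrun : ∀ j ≤ s, mfun hn0 x (a + j) = M)
    (hnw : ∀ j < s, ¬Witness G W γ M (x (a + j))) (hup : ∃ h, IsUpper W γ M (x a) h) :
    (s : ℝ) ≤ 3 * n * ((1 / (2 * deltaMin G W) + 1) ^ (n - 2) - 1) := by
  obtain ⟨h, hh⟩ := hup
  have hbound := hG.apply_le_pow_mul (f := fun v => (lowCount x M a s v : ℝ) + 3)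
    (c := 1 / (2 * deltaMin G W) + 1) (B := 3) (h := h)
    (one_le_inv_two_mul_deltaMin_add_one hW hG hn)
    (by norm_num) (fun p q hpq => lowCount_add_three_le hn0 hW hx hγ hG hn hrun hnw hpq)
    (by simp [lowCount_eq_zero_of_isUpper hn0 hW hx hγ hrun hnw hh (Or.inl rfl)])
    (fun u hu => by simp [lowCount_eq_zero_of_isUpper hn0 hW hx hγ hrun hnw hh (Or.inr hu.symm)])
  rw [Fintype.card_fin] at hbound
  calc (s : ℝ) ≤ ∑ v, (lowCount x M a s v : ℝ) := by exact_mod_cast le_sum_lowCount hn0 hrun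
    _ ≤ ∑ _v : Fin n, ((1 / (2 * deltaMin G W) + 1) ^ (n - 2) * 3 - 3) :=
      sum_le_sum fun v _ => by linarith [hbound v]
    _ = _ := by
      rw [sum_const, card_univ, Fintype.card_fin, nsmul_eq_mul]
      ring

end Run

theorem potential_nonneg (u : Fin n → ℝ) : 0 ≤ potential W γ M u :=
  sum_nonneg fun _ _ => le_max_right _ _

theorem potential_le_Vfun (hn0 : 0 < n) (k : ℕ) :
    potential W γ (mfun hn0 x k) (x k) ≤ Vfun hn0 W γ x k :=
  sum_le_sum fun i _ =>
    max_le_max (by linarith [le_abs_self (x k i - mfun hn0 x k - 1)]) le_rfl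

open Classical in
theorem card_witness_mul_le (hW : Assumption1 G W) (hx : Traj W x) (hγ : GammaSetup W x γ)
    {k0 N : ℕ} (hM : ∀ j ≤ N, ∀ i, M ≤ ⌊x (k0 + j) i⌋) :
    (((range N).filter fun j => Witness G W γ M (x (k0 + j))).card : ℝ) *
      min γ (deltaMin G W) ≤ potential W γ M (x k0) := by
  have htel := add_sum_range_le_of_succ_add_le (f := fun j => potential W γ M (x (k0 + j)))
    (d := fun j => min γ (deltaMin G W) * if Witness G W γ M (x (k0 + j)) then 1 else 0)
    fun j hj => by
      rw [← add_assoc]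
      split_ifs with hw
      · rw [mul_one]
        exact potential_succ_add_le_of_witness hW hx hγ (hM j hj.le) hw
      · rw [mul_zero, add_zero]
        exact potential_succ_le hW hx hγ (hM j hj.le)
  rw [← mul_sum, ← natCast_card_filter, add_zero] at htel
  linarith [potential_nonneg (W := W) (γ := γ) (M := M) (x (k0 + N))]

theorem three_mul_pow_sub_one_add_one_le (hW : Assumption1 G W) (hG : G.Connected) (hn : 1 < n) :
    3 * n * ((1 / (2 * deltaMin G W) + 1) ^ (n - 2) - 1) + 1 ≤
      n * (1 / (2 * deltaMin G W) + 1) ^ (n - 1) := by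
  have hδ := deltaMin_pos hW hG hn
  rw [show n - 1 = n - 2 + 1 by omega, pow_succ]
  rcases (show n = 2 ∨ 3 ≤ n by omega) with rfl | h3
  · norm_num
    linarith [inv_nonneg.2 hδ.le]
  · set ρ := 1 / (2 * deltaMin G W)
    have hρ : 2 < ρ := by
      rw [lt_div_iff₀ (by positivity)]
      linarith [deltaMin_lt_quarter hW hG h3]
    have hA : 1 ≤ (ρ + 1) ^ (n - 2) := one_le_pow₀ (by linarith)
    have hn3 : (3 : ℝ) ≤ n := by exact_mod_cast h3
    have := mul_nonneg (mul_nonneg (Nat.cast_nonneg n) (by linarith : (0 : ℝ) ≤ (ρ + 1) ^ (n - 2)))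
      (by linarith : (0 : ℝ) ≤ ρ - 2)
    nlinarith

theorem length_le_of_upper_nonempty (hW : Assumption1 G W) (hx : Traj W x)
    (hγ : GammaSetup W x γ) (hG : G.Connected) (hn : 1 < n) (hn0 : 0 < n) {k0 N : ℕ}
    (hrun : ∀ j ≤ N, mfun hn0 x (k0 + j) = M)
    (hupper : ∀ j ≤ N, ∃ i, IsUpper W γ M (x (k0 + j)) i) :
    (N : ℝ) ≤ potential W γ M (x k0) / min γ (deltaMin G W) *
        (3 * n * ((1 / (2 * deltaMin G W) + 1) ^ (n - 2) - 1) + 1) +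
      3 * n * ((1 / (2 * deltaMin G W) + 1) ^ (n - 2) - 1) := by
  classical
  set T := 3 * (n : ℝ) * ((1 / (2 * deltaMin G W) + 1) ^ (n - 2) - 1)
  have hβ : 0 < min γ (deltaMin G W) := lt_min hγ.pos (deltaMin_pos hW hG hn)
  have hT : 0 ≤ T := by
    have := one_le_pow₀ (n := n - 2) (one_le_inv_two_mul_deltaMin_add_one hW hG hn)
    positivity
  have hgap := le_card_filter_mul_add (P := fun j => Witness G W γ M (x (k0 + j)))
    (T := ⌊T⌋₊) N fun a s has hnw => Nat.le_floor <|
      run_length_le hn0 hW hx hγ hG hn (a := k0 + a) (s := s)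
        (fun j hj => by rw [add_assoc]; exact hrun _ (by omega))
        (fun j hj => by rw [add_assoc]; exact hnw _ (by omega) (by omega))
        (hupper a (by omega))
  set C := ((range N).filter fun j => Witness G W γ M (x (k0 + j))).card
  have hC : (C : ℝ) ≤ potential W γ M (x k0) / min γ (deltaMin G W) :=
    (le_div_iff₀ hβ).2 (card_witness_mul_le hW hx hγ fun j hj =>
      le_floor_of_mfun_eq hn0 (hrun j hj))
  have hgapR : (N : ℝ) ≤ C * (⌊T⌋₊ + 1) + ⌊T⌋₊ := by exact_mod_cast hgap
  have hT0 : (⌊T⌋₊ : ℝ) ≤ T := Nat.floor_le hT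
  have : (C : ℝ) * (⌊T⌋₊ + 1) ≤ potential W γ M (x k0) / min γ (deltaMin G W) * (T + 1) :=
    mul_le_mul hC (by linarith) (by positivity) (div_nonneg (potential_nonneg _) hβ.le)
  linarith

def Settled (W : Matrix (Fin n) (Fin n) ℝ) (γ : ℝ) (hn0 : 0 < n) (x : ℕ → Fin n → ℝ)
    (k0 k : ℕ) : Prop :=
  (∀ i, ¬IsUpper W γ (mfun hn0 x k) (x k) i) ∨ mfun hn0 x k0 < mfun hn0 x k

theorem exists_settled (hW : Assumption1 G W) (hx : Traj W x) (hγ : GammaSetup W x γ)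
    (hG : G.Connected) (hn : 1 < n) (hn0 : 0 < n) (k0 : ℕ) :
    ∃ j : ℕ, (j : ℝ) ≤ n * (Vfun hn0 W γ x k0 / min γ (deltaMin G W) + 1) *
        (1 / (2 * deltaMin G W) + 1) ^ (n - 1) ∧ Settled W γ hn0 x k0 (k0 + j) := by
  set c := 1 / (2 * deltaMin G W) + 1
  set q := Vfun hn0 W γ x k0 / min γ (deltaMin G W)
  set T := 3 * (n : ℝ) * (c ^ (n - 2) - 1)
  set B := n * (q + 1) * c ^ (n - 1)
  have hβ : 0 < min γ (deltaMin G W) := lt_min hγ.pos (deltaMin_pos hW hG hn)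
  have hV := potential_le_Vfun (W := W) (γ := γ) (x := x) hn0 k0
  have hpot := div_le_div_of_nonneg_right hV hβ.le
  have hq : 0 ≤ q := (div_nonneg (potential_nonneg _) hβ.le).trans hpot
  have hT : 0 ≤ T := by
    have := one_le_pow₀ (n := n - 2) (one_le_inv_two_mul_deltaMin_add_one hW hG hn)
    positivity
  have hTB : (q + 1) * (T + 1) ≤ B := by
    have := three_mul_pow_sub_one_add_one_le hW hG hn
    calc (q + 1) * (T + 1) ≤ (q + 1) * (n * c ^ (n - 1)) := by gcongr
      _ = B := by ring
  by_contra! hbad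
  simp only [Settled, not_or, not_forall, not_not, not_lt] at hbad
  have hB : 0 ≤ B := (mul_nonneg (by linarith) (by linarith)).trans hTB
  have hle : ∀ j ≤ ⌊B⌋₊, (j : ℝ) ≤ B := fun j hj => (Nat.cast_le.2 hj).trans (Nat.floor_le hB)
  have hrun : ∀ j ≤ ⌊B⌋₊, mfun hn0 x (k0 + j) = mfun hn0 x k0 := fun j hj =>
    le_antisymm (hbad j (hle j hj)).2 (mfun_monotone hn0 hW hx (by omega))
  have hlen := length_le_of_upper_nonempty hW hx hγ hG hn hn0 hrun fun j hj =>
    hrun j hj ▸ (hbad j (hle j hj)).1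
  have : potential W γ (mfun hn0 x k0) (x k0) / min γ (deltaMin G W) * (T + 1) ≤ q * (T + 1) := by
    gcongr
  linarith [Nat.lt_floor_add_one B]

theorem settled_of_le (hW : Assumption1 G W) (hx : Traj W x) (hγ : GammaSetup W x γ)
    (hn0 : 0 < n) {k0 k1 k : ℕ} (hk1 : k0 ≤ k1) (h1 : Settled W γ hn0 x k0 k1) (hk : k1 ≤ k) :
    Settled W γ hn0 x k0 k := by
  have hmono := mfun_monotone hn0 hW hx
  induction k, hk using Nat.le_induction with
  | base => exact h1
  | succ k hk ih =>
    rcases ih with hup | hlt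
    · rcases (hmono k.le_succ).eq_or_lt with heq | hlt
      · left
        rw [← heq]
        exact fun i => not_isUpper_succ hW hx hγ (le_floor_of_mfun_eq hn0 rfl) (hup i)
          fun j _ => floor_le_of_not_isUpper hγ (hup j)
      · exact Or.inr ((hmono (hk1.trans hk)).trans_lt hlt)
    · exact Or.inr (hlt.trans_le (hmono k.le_succ))

end QuantizedConsensus

/-- Lemma 6: bounded time until the upper sets empty or the minimum level increases. -/
theorem bounded_time_upper_sets {n : ℕ} (hn : 1 < n)
    (G : SimpleGraph (Fin n)) (hG : G.Connected)
    (W : Matrix (Fin n) (Fin n) ℝ) (hW : Assumption1 G W)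
    (x : ℕ → Fin n → ℝ) (hx : Traj W x)
    (γ : ℝ) (hγ : GammaSetup W x γ)
    (k0 : ℕ) :
    ∃ k1 : ℕ, k0 ≤ k1 ∧
      (k1 : ℝ) ≤ (k0 : ℝ) + (n : ℝ) *
        (Vfun (Nat.zero_lt_one.trans hn) W γ x k0 / min γ (deltaMin G W) + 1) *
        (1 / (2 * deltaMin G W) + 1) ^ (n - 1) ∧
      ∀ k, k1 ≤ k →
        (∀ i, x k i ≤ (mfun (Nat.zero_lt_one.trans hn) x k : ℝ) + 1 + alpha W γ i) ∨
        mfun (Nat.zero_lt_one.trans hn) x k0 < mfun (Nat.zero_lt_one.trans hn) x k := by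
  obtain ⟨j, hjB, hj⟩ :=
    QuantizedConsensus.exists_settled hW hx hγ hG hn (Nat.zero_lt_one.trans hn) k0
  refine ⟨k0 + j, Nat.le_add_right k0 j, by push_cast; linarith, fun k hk => ?_⟩
  rcases QuantizedConsensus.settled_of_le hW hx hγ _ (Nat.le_add_right k0 j) hj hk with h | h
  · exact Or.inl fun i => not_lt.1 (h i)
  · exact Or.inr h
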